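/- Let \kappa be a positive integer, j an integer, \eta \in \mathbb{C} with Im \eta < 0, \tau \in \mathbb{C} with Im \tau > 0, and \lambda \in \mathbb{C} (note Im(\tau - 2\eta\kappa) > 0). Then the function t \mapsto \exp(-i\pi(\lambda + 2\eta t)^2/(4\eta)) \theta_{j,\kappa}(-2\eta t, \tau - 2\eta\kappa) is (absolutely) integrable on \mathbb{R}, and \theta_{j,\kappa}(\lambda,\tau) = (i/\sqrt{4i\eta}) \cdot 2\eta \int_{\mathbb{R}} \exp(-i\pi(\lambda + 2\eta t)^2/(4\eta)) \theta_{j,\kappa}(-2\eta t, \tau - 2\eta\kappa)\, dt, where \sqrt{\cdot} denotes the principal branch of the complex square root (note Re(4i\eta) > 0). -/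

import Mathlib

open Complex MeasureTheory

/-- `θ_{j,κ}(λ,τ) = ∑_{r ∈ ℤ + j/(2κ)} exp(2πiκ(r²τ + rλ))`. -/
noncomputable def thetaJK (κ : ℕ) (j : ℤ) (lam τ : ℂ) : ℂ :=
  ∑' r : ℤ, Complex.exp (2 * (Real.pi : ℂ) * Complex.I * (κ : ℂ) *
    (((r : ℂ) + (j : ℂ) / (2 * (κ : ℂ))) ^ 2 * τ + ((r : ℂ) + (j : ℂ) / (2 * (κ : ℂ))) * lam))

section ThetaHeatAux

open Real

lemma summable_exp_int_quad (B A : ℝ) (hB : B < 0) :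
    Summable fun n : ℤ => Real.exp (B * n ^ 2 + A * n) := by
  have hT : 0 < -B / π := div_pos (neg_pos.2 hB) Real.pi_pos
  have h0 := summable_pow_mul_jacobiTheta₂_term_bound (|A| / (2 * π)) hT 0
  refine h0.of_nonneg_of_le (fun n => (Real.exp_pos _).le) (fun n => ?_)
  rw [pow_zero, one_mul, Real.exp_le_exp]
  have h1 : -π * ((-B / π) * (n : ℝ) ^ 2 - 2 * (|A| / (2 * π)) * |(n : ℝ)|)
      = B * (n : ℝ) ^ 2 + |A| * |(n : ℝ)| := by
    field_simp
    ring
  rw [show ((|n| : ℤ) : ℝ) = |(n : ℝ)| from by push_cast; ring, h1]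
  have h2 : A * (n : ℝ) ≤ |A| * |(n : ℝ)| := by
    calc A * (n : ℝ) ≤ |A * (n : ℝ)| := le_abs_self _
    _ = |A| * |(n : ℝ)| := abs_mul _ _
  linarith

lemma summable_exp_shift_quad (B A C δ : ℝ) (hB : B < 0) :
    Summable fun n : ℤ => Real.exp (B * ((n : ℝ) + δ) ^ 2 + A * ((n : ℝ) + δ) + C) := by
  refine ((summable_exp_int_quad B (A + 2 * B * δ) hB).mul_right
    (Real.exp (B * δ ^ 2 + A * δ + C))).congr fun n => ?_
  rw [← Real.exp_add]
  congr 1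
  ring

lemma norm_cexp_quad (b c d : ℂ) (t : ℝ) :
    ‖cexp (b * t ^ 2 + c * t + d)‖ = Real.exp (b.re * t ^ 2 + c.re * t + d.re) := by
  rw [Complex.norm_exp]
  congr 1
  simp [Complex.add_re, Complex.mul_re, Complex.ofReal_re, Complex.ofReal_im, pow_two]

lemma integral_norm_cexp_quad {b : ℂ} (hb : b.re < 0) (c d : ℂ) :
    ∫ t : ℝ, ‖cexp (b * t ^ 2 + c * t + d)‖ =
      (π / -b.re) ^ ((1 : ℝ) / 2) * Real.exp (d.re - c.re ^ 2 / (4 * b.re)) := by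
  simp_rw [norm_cexp_quad]
  have hb' : ((b.re : ℂ)).re < 0 := by simpa using hb
  have h2 := integral_cexp_quadratic hb' (c.re : ℂ) (d.re : ℂ)
  have h6 := ContinuousLinearMap.integral_comp_comm Complex.reCLM
    (integrable_cexp_quadratic' hb' (c.re : ℂ) (d.re : ℂ)) (μ := volume)
  simp only [Complex.reCLM_apply] at h6
  have h4 : ((π : ℂ) / -(b.re : ℂ)) ^ ((1 : ℂ) / 2) *
        cexp ((d.re : ℂ) - (c.re : ℂ) ^ 2 / (4 * (b.re : ℂ)))
      = (((π / -b.re) ^ ((1 : ℝ) / 2) * Real.exp (d.re - c.re ^ 2 / (4 * b.re)) : ℝ) : ℂ) := by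
    rw [Complex.ofReal_mul, Complex.ofReal_exp,
      Complex.ofReal_cpow (div_nonneg pi_pos.le (by linarith)) ((1 : ℝ) / 2)]
    push_cast
    ring_nf
  rw [h2, h4, Complex.ofReal_re] at h6
  rw [← h6]
  congr 1
  funext t
  rw [show ((b.re : ℂ) * (t : ℂ) ^ 2 + (c.re : ℂ) * (t : ℂ) + (d.re : ℂ))
      = ((b.re * t ^ 2 + c.re * t + d.re : ℝ) : ℂ) from by push_cast; ring,
    ← Complex.ofReal_exp, Complex.ofReal_re]

lemma sqrt_four_mul {w : ℂ} (hw0 : w ≠ 0) :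
    (((4 : ℝ) : ℂ) * w) ^ ((1 : ℂ) / 2) = 2 * w ^ ((1 : ℂ) / 2) := by
  rw [Complex.cpow_def_of_ne_zero (mul_ne_zero (by norm_num) hw0),
    Complex.log_ofReal_mul (by norm_num) hw0, Complex.cpow_def_of_ne_zero hw0,
    add_mul, Complex.exp_add]
  congr 1
  rw [show ((Real.log 4 : ℝ) : ℂ) * ((1 : ℂ) / 2) = ((Real.log 2 : ℝ) : ℂ) from by
      rw [show (4 : ℝ) = 2 ^ 2 from by norm_num, Real.log_pow]; push_cast; ring,
    ← Complex.ofReal_exp, Real.exp_log (by norm_num)]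
  norm_num

lemma prefactor_eq (η : ℂ) (hη : η.im < 0) :
    Complex.I / ((4 * Complex.I * η) ^ ((1 : ℂ) / 2)) * (2 * η) *
      ((Complex.I * η)⁻¹) ^ ((1 : ℂ) / 2) = 1 := by
  set w : ℂ := Complex.I * η with hw
  have hwre : 0 < w.re := by simp [hw, Complex.mul_re]; linarith
  have hw0 : w ≠ 0 := fun h => by rw [h] at hwre; simp at hwre
  have harg : w.arg ≠ π := by
    intro h
    rw [Complex.arg_eq_pi_iff] at h
    linarith [h.1]
  have h2 : (w⁻¹) ^ ((1 : ℂ) / 2) = (w ^ ((1 : ℂ) / 2))⁻¹ := Complex.inv_cpow _ _ harg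
  have h3 : w ^ ((1 : ℂ) / 2) * w ^ ((1 : ℂ) / 2) = w := by
    rw [← Complex.cpow_add _ _ hw0]
    norm_num
  have h4 : w ^ ((1 : ℂ) / 2) ≠ 0 := by
    intro h
    rw [h, mul_zero] at h3
    exact hw0 h3.symm
  have h5 : 4 * Complex.I * η = ((4 : ℝ) : ℂ) * w := by rw [hw]; push_cast; ring
  rw [h5, sqrt_four_mul hw0, h2]
  field_simp
  rw [pow_two, h3, hw]

/-- Factorization of `thetaJK` through `jacobiTheta₂`, used for continuity. -/
lemma thetaJK_eq_jacobiTheta₂ (κ : ℕ) (hκ : 0 < κ) (j : ℤ) (lam τ : ℂ) :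
    thetaJK κ j lam τ = cexp ((π : ℂ) * Complex.I * (j : ℂ) ^ 2 * τ / (2 * (κ : ℂ)) +
        (π : ℂ) * Complex.I * (j : ℂ) * lam) *
      jacobiTheta₂ ((j : ℂ) * τ + (κ : ℂ) * lam) (2 * (κ : ℂ) * τ) := by
  rw [thetaJK, jacobiTheta₂, ← tsum_mul_left]
  congr 1
  funext r
  rw [jacobiTheta₂_term, ← Complex.exp_add]
  congr 1
  have hK : (κ : ℂ) ≠ 0 := Nat.cast_ne_zero.2 hκ.ne'
  field_simp
  ring

end ThetaHeatAux

set_option maxHeartbeats 1600000 in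
/-- The Gaussian integral identity
`θ_{j,κ}(λ,τ) = (i/√(4iη)) ∫_{2ηℝ} exp(-iπ(λ+μ)²/(4η)) θ_{j,κ}(-μ, τ-2ηκ) dμ`,
with the contour parametrized as `μ = 2ηt`, `t ∈ ℝ`, and the principal branch
of the square root. -/
theorem thetaJK_heat_integral (κ : ℕ) (hκ : 0 < κ) (j : ℤ) (η τ lam : ℂ)
    (hη : η.im < 0) (hτ : 0 < τ.im) :
    Integrable (fun t : ℝ =>
      Complex.exp (-Complex.I * (Real.pi : ℂ) * (lam + 2 * η * (t : ℂ)) ^ 2 / (4 * η)) *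
        thetaJK κ j (-(2 * η * (t : ℂ))) (τ - 2 * η * (κ : ℂ))) ∧
    thetaJK κ j lam τ =
      Complex.I / ((4 * Complex.I * η) ^ ((1 : ℂ) / 2)) * (2 * η) *
        ∫ t : ℝ,
          Complex.exp (-Complex.I * (Real.pi : ℂ) * (lam + 2 * η * (t : ℂ)) ^ 2 / (4 * η)) *
            thetaJK κ j (-(2 * η * (t : ℂ))) (τ - 2 * η * (κ : ℂ)) := by
  have hπ : (Real.pi : ℝ) ≠ 0 := Real.pi_ne_zero
  have hπC : ((Real.pi : ℝ) : ℂ) ≠ 0 := Complex.ofReal_ne_zero.2 hπ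
  have hKR : (κ : ℝ) ≠ 0 := Nat.cast_ne_zero.2 hκ.ne'
  have hK : (κ : ℂ) ≠ 0 := Nat.cast_ne_zero.2 hκ.ne'
  have hη0 : η ≠ 0 := fun h => by simp [h] at hη
  have hηim : η.im ≠ 0 := ne_of_lt hη
  -- abbreviations
  set δ : ℝ := (j : ℝ) / (2 * κ) with hδ
  set A1 : ℤ → ℝ := fun r => (r : ℝ) + δ with hA1
  set b : ℂ := -(Real.pi : ℂ) * Complex.I * η with hb_def
  set cc : ℤ → ℂ := fun r =>
    -(Real.pi : ℂ) * Complex.I * lam -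
      4 * (Real.pi : ℂ) * Complex.I * (κ : ℂ) * ((A1 r : ℝ) : ℂ) * η with hcc_def
  set dd : ℤ → ℂ := fun r =>
    -(Real.pi : ℂ) * Complex.I * lam ^ 2 / (4 * η) +
      2 * (Real.pi : ℂ) * Complex.I * (κ : ℂ) * ((A1 r : ℝ) : ℂ) ^ 2 *
        (τ - 2 * η * (κ : ℂ)) with hdd_def
  set g : ℤ → ℝ → ℂ := fun r t => cexp (b * (t : ℂ) ^ 2 + cc r * (t : ℂ) + dd r) with hg_def
  have hcast : ∀ r : ℤ, ((A1 r : ℝ) : ℂ) = (r : ℂ) + (j : ℂ) / (2 * (κ : ℂ)) := by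
    intro r
    rw [hA1, hδ]
    push_cast
    ring
  have hbre : b.re = Real.pi * η.im := by
    rw [hb_def, show -(Real.pi : ℂ) * Complex.I * η =
      ((Real.pi : ℝ) : ℂ) * (-(Complex.I * η)) from by ring, Complex.re_ofReal_mul]
    simp
  have hb : b.re < 0 := by
    rw [hbre]
    exact mul_neg_of_pos_of_neg Real.pi_pos hη
  have hcre : ∀ r, (cc r).re = Real.pi * lam.im + 4 * Real.pi * κ * A1 r * η.im := by
    intro r
    rw [hcc_def]
    beta_reduce
    rw [show -(Real.pi : ℂ) * Complex.I * lam -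
        4 * (Real.pi : ℂ) * Complex.I * (κ : ℂ) * ((A1 r : ℝ) : ℂ) * η
      = ((Real.pi : ℝ) : ℂ) * (-(Complex.I * lam)) +
        ((4 * Real.pi * κ * A1 r : ℝ) : ℂ) * (-(Complex.I * η)) from by push_cast; ring]
    rw [Complex.add_re, Complex.re_ofReal_mul, Complex.re_ofReal_mul]
    simp
    try ring
  have hτ'im : (τ - 2 * η * (κ : ℂ)).im = τ.im - 2 * η.im * κ := by
    simp [Complex.sub_im, Complex.mul_im]
  have hdre : ∀ r, (dd r).re =
      (-(Real.pi : ℂ) * Complex.I * lam ^ 2 / (4 * η)).re -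
        2 * Real.pi * κ * (A1 r) ^ 2 * (τ.im - 2 * η.im * κ) := by
    intro r
    rw [hdd_def]
    beta_reduce
    rw [show -(Real.pi : ℂ) * Complex.I * lam ^ 2 / (4 * η) +
        2 * (Real.pi : ℂ) * Complex.I * (κ : ℂ) * ((A1 r : ℝ) : ℂ) ^ 2 * (τ - 2 * η * (κ : ℂ))
      = -(Real.pi : ℂ) * Complex.I * lam ^ 2 / (4 * η) +
        ((2 * Real.pi * κ * (A1 r) ^ 2 : ℝ) : ℂ) * (Complex.I * (τ - 2 * η * (κ : ℂ)))
        from by push_cast; ring]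
    rw [Complex.add_re, Complex.re_ofReal_mul, Complex.I_mul_re, hτ'im]
    ring
  -- the key pointwise expansion
  have key : ∀ t : ℝ,
      Complex.exp (-Complex.I * (Real.pi : ℂ) * (lam + 2 * η * (t : ℂ)) ^ 2 / (4 * η)) *
        thetaJK κ j (-(2 * η * (t : ℂ))) (τ - 2 * η * (κ : ℂ)) = ∑' r : ℤ, g r t := by
    intro t
    rw [thetaJK, ← tsum_mul_left]
    congr 1
    funext r
    rw [hg_def]
    simp only
    rw [← Complex.exp_add]
    congr 1
    rw [hb_def, hcc_def, hdd_def]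
    simp only
    rw [hcast r]
    field_simp
    ring
  -- integrability of each term
  have hint : ∀ r : ℤ, Integrable (g r) := fun r =>
    integrable_cexp_quadratic' hb (cc r) (dd r)
  -- summability of integrals of norms
  have hsum : Summable fun r : ℤ => ∫ t : ℝ, ‖g r t‖ := by
    simp_rw [hg_def, integral_norm_cexp_quad hb]
    refine Summable.mul_left _ ?_
    have hquad : ∀ r : ℤ, (dd r).re - (cc r).re ^ 2 / (4 * b.re) =
        (-2 * Real.pi * κ * τ.im) * (A1 r) ^ 2 + (-2 * Real.pi * κ * lam.im) * (A1 r) +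
          ((-(Real.pi : ℂ) * Complex.I * lam ^ 2 / (4 * η)).re -
            Real.pi * lam.im ^ 2 / (4 * η.im)) := by
      intro r
      rw [hdre, hcre, hbre]
      field_simp
      ring
    simp_rw [hquad]
    exact summable_exp_shift_quad _ _ _ δ
      (by
        have hκR : (0 : ℝ) < κ := by exact_mod_cast hκ
        have := mul_pos (mul_pos (mul_pos two_pos Real.pi_pos) hκR) hτ
        linarith)
  -- pointwise summability of norms
  have hpt : ∀ t : ℝ, Summable fun r : ℤ => ‖g r t‖ := by
    intro t
    simp_rw [hg_def, norm_cexp_quad]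
    have hquad : ∀ r : ℤ, b.re * t ^ 2 + (cc r).re * t + (dd r).re =
        (-2 * Real.pi * κ * (τ.im - 2 * η.im * κ)) * (A1 r) ^ 2 +
          (4 * Real.pi * κ * η.im * t) * (A1 r) +
          (b.re * t ^ 2 + Real.pi * lam.im * t +
            (-(Real.pi : ℂ) * Complex.I * lam ^ 2 / (4 * η)).re) := by
      intro r
      rw [hdre, hcre]
      ring
    simp_rw [hquad]
    refine summable_exp_shift_quad _ _ _ δ ?_
    have hκR : (0 : ℝ) < κ := by exact_mod_cast hκ
    have h1 : (0:ℝ) < τ.im - 2 * η.im * κ := by nlinarith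
    nlinarith [Real.pi_pos, mul_pos (mul_pos Real.pi_pos hκR) h1]
  -- continuity, hence measurability
  have hτ2 : 0 < (2 * (κ : ℂ) * (τ - 2 * η * (κ : ℂ))).im := by
    have h1 : (2 * (κ : ℂ) * (τ - 2 * η * (κ : ℂ))).im = 2 * κ * (τ.im - 2 * η.im * κ) := by
      rw [show (2 * (κ : ℂ)) = ((2 * κ : ℝ) : ℂ) from by push_cast; ring, Complex.mul_im]
      simp [hτ'im]
      try ring
    rw [h1]
    have hκR : (0 : ℝ) < κ := by exact_mod_cast hκ
    have h2 : (0 : ℝ) < τ.im - 2 * η.im * κ := by nlinarith [mul_pos hκR (neg_pos.2 hη)]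
    exact mul_pos (mul_pos two_pos hκR) h2
  have hcont : Continuous (fun t : ℝ =>
      Complex.exp (-Complex.I * (Real.pi : ℂ) * (lam + 2 * η * (t : ℂ)) ^ 2 / (4 * η)) *
        thetaJK κ j (-(2 * η * (t : ℂ))) (τ - 2 * η * (κ : ℂ))) := by
    have hrw : ∀ t : ℝ, thetaJK κ j (-(2 * η * (t : ℂ))) (τ - 2 * η * (κ : ℂ)) =
        cexp ((Real.pi : ℂ) * Complex.I * (j : ℂ) ^ 2 * (τ - 2 * η * (κ : ℂ)) / (2 * (κ : ℂ)) +
            (Real.pi : ℂ) * Complex.I * (j : ℂ) * (-(2 * η * (t : ℂ)))) *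
          jacobiTheta₂ ((j : ℂ) * (τ - 2 * η * (κ : ℂ)) + (κ : ℂ) * (-(2 * η * (t : ℂ))))
            (2 * (κ : ℂ) * (τ - 2 * η * (κ : ℂ))) := fun t =>
      thetaJK_eq_jacobiTheta₂ κ hκ j _ _
    simp_rw [hrw]
    have hθ : Continuous (fun t : ℝ =>
        jacobiTheta₂ ((j : ℂ) * (τ - 2 * η * (κ : ℂ)) + (κ : ℂ) * (-(2 * η * (t : ℂ))))
          (2 * (κ : ℂ) * (τ - 2 * η * (κ : ℂ)))) := by
      refine continuous_iff_continuousAt.2 fun t => ?_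
      have hg2 : Continuous fun t : ℝ =>
          (((j : ℂ) * (τ - 2 * η * (κ : ℂ)) + (κ : ℂ) * (-(2 * η * (t : ℂ))),
            2 * (κ : ℂ) * (τ - 2 * η * (κ : ℂ))) : ℂ × ℂ) := by fun_prop
      exact ContinuousAt.comp (g := fun p : ℂ × ℂ => jacobiTheta₂ p.1 p.2)
        (f := fun t : ℝ => (((j : ℂ) * (τ - 2 * η * (κ : ℂ)) + (κ : ℂ) * (-(2 * η * (t : ℂ))),
          2 * (κ : ℂ) * (τ - 2 * η * (κ : ℂ))) : ℂ × ℂ))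
        (continuousAt_jacobiTheta₂ _ hτ2) hg2.continuousAt
    exact (Complex.continuous_exp.comp (by fun_prop)).mul
      ((Complex.continuous_exp.comp (by fun_prop)).mul hθ)
  -- integrability
  have hInt : Integrable (fun t : ℝ =>
      Complex.exp (-Complex.I * (Real.pi : ℂ) * (lam + 2 * η * (t : ℂ)) ^ 2 / (4 * η)) *
        thetaJK κ j (-(2 * η * (t : ℂ))) (τ - 2 * η * (κ : ℂ))) := by
    refine ⟨hcont.aestronglyMeasurable, ?_⟩
    rw [HasFiniteIntegral]
    calc ∫⁻ t : ℝ, ‖Complex.exp (-Complex.I * (Real.pi : ℂ) * (lam + 2 * η * (t : ℂ)) ^ 2 /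
            (4 * η)) * thetaJK κ j (-(2 * η * (t : ℂ))) (τ - 2 * η * (κ : ℂ))‖₊
        ≤ ∫⁻ t : ℝ, ∑' r : ℤ, (‖g r t‖₊ : ENNReal) := by
          refine lintegral_mono fun t => ?_
          rw [key t]
          calc (‖∑' r : ℤ, g r t‖₊ : ENNReal) ≤ ((∑' r : ℤ, ‖g r t‖₊ : NNReal) : ENNReal) := by
                exact_mod_cast ENNReal.coe_le_coe.2
                  (nnnorm_tsum_le (NNReal.summable_coe.1 (by simpa only [coe_nnnorm] using hpt t)))
          _ = ∑' r : ℤ, (‖g r t‖₊ : ENNReal) :=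
                ENNReal.coe_tsum (NNReal.summable_coe.1 (by simpa only [coe_nnnorm] using hpt t))
      _ = ∑' r : ℤ, ∫⁻ t : ℝ, (‖g r t‖₊ : ENNReal) :=
          lintegral_tsum fun r => (hint r).aestronglyMeasurable.enorm
      _ = ∑' r : ℤ, ENNReal.ofReal (∫ t : ℝ, ‖g r t‖) := by
          congr 1
          funext r
          rw [lintegral_coe_eq_integral (fun t => ‖g r t‖₊)
            (by simpa only [coe_nnnorm] using (hint r).norm)]
          simp [coe_nnnorm]
      _ < ⊤ := by
          rw [← ENNReal.ofReal_tsum_of_nonneg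
            (fun r => integral_nonneg fun t => norm_nonneg _) hsum]
          exact ENNReal.ofReal_lt_top
  refine ⟨hInt, ?_⟩
  -- swap the integral and the sum
  have hswap : (∫ t : ℝ,
      Complex.exp (-Complex.I * (Real.pi : ℂ) * (lam + 2 * η * (t : ℂ)) ^ 2 / (4 * η)) *
        thetaJK κ j (-(2 * η * (t : ℂ))) (τ - 2 * η * (κ : ℂ)))
      = ∑' r : ℤ, ∫ t : ℝ, g r t := by
    rw [show (fun t : ℝ =>
        Complex.exp (-Complex.I * (Real.pi : ℂ) * (lam + 2 * η * (t : ℂ)) ^ 2 / (4 * η)) *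
          thetaJK κ j (-(2 * η * (t : ℂ))) (τ - 2 * η * (κ : ℂ)))
      = fun t : ℝ => ∑' r : ℤ, g r t from funext key]
    exact (integral_tsum_of_summable_integral_norm hint hsum).symm
  rw [hswap]
  -- per-term evaluation
  have hterm : ∀ r : ℤ,
      Complex.I / ((4 * Complex.I * η) ^ ((1 : ℂ) / 2)) * (2 * η) * ∫ t : ℝ, g r t =
      Complex.exp (2 * (Real.pi : ℂ) * Complex.I * (κ : ℂ) *
        (((r : ℂ) + (j : ℂ) / (2 * (κ : ℂ))) ^ 2 * τ +
          ((r : ℂ) + (j : ℂ) / (2 * (κ : ℂ))) * lam)) := by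
    intro r
    rw [hg_def]
    simp only
    rw [integral_cexp_quadratic hb (cc r) (dd r)]
    have hexp : dd r - (cc r) ^ 2 / (4 * b) =
        2 * (Real.pi : ℂ) * Complex.I * (κ : ℂ) *
          (((r : ℂ) + (j : ℂ) / (2 * (κ : ℂ))) ^ 2 * τ +
            ((r : ℂ) + (j : ℂ) / (2 * (κ : ℂ))) * lam) := by
      rw [hdd_def, hcc_def, hb_def]
      simp only
      rw [hcast r]
      have h4b : (4 : ℂ) * (-(Real.pi : ℂ) * Complex.I * η) ≠ 0 := by
        simp [hπC, Complex.I_ne_zero, hη0]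
      rw [sub_eq_iff_eq_add, eq_comm, add_comm, ← eq_sub_iff_add_eq, div_eq_iff h4b]
      field_simp [hη0, hK]
      ring
    have harg : ((Real.pi : ℂ)) / -b = (Complex.I * η)⁻¹ := by
      rw [hb_def,
        div_eq_iff (show -(-(Real.pi : ℂ) * Complex.I * η) ≠ 0 from by
          simp [hπC, Complex.I_ne_zero, hη0]),
        inv_mul_eq_div, eq_div_iff (mul_ne_zero Complex.I_ne_zero hη0)]
      ring
    rw [harg, hexp]
    rw [show Complex.I / ((4 * Complex.I * η) ^ ((1 : ℂ) / 2)) * (2 * η) *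
        (((Complex.I * η)⁻¹) ^ ((1 : ℂ) / 2) * cexp (2 * (Real.pi : ℂ) * Complex.I * (κ : ℂ) *
          (((r : ℂ) + (j : ℂ) / (2 * (κ : ℂ))) ^ 2 * τ +
            ((r : ℂ) + (j : ℂ) / (2 * (κ : ℂ))) * lam)))
      = (Complex.I / ((4 * Complex.I * η) ^ ((1 : ℂ) / 2)) * (2 * η) *
          ((Complex.I * η)⁻¹) ^ ((1 : ℂ) / 2)) * cexp (2 * (Real.pi : ℂ) * Complex.I * (κ : ℂ) *
          (((r : ℂ) + (j : ℂ) / (2 * (κ : ℂ))) ^ 2 * τ +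
            ((r : ℂ) + (j : ℂ) / (2 * (κ : ℂ))) * lam)) from by ring,
      prefactor_eq η hη, one_mul]
  rw [← tsum_mul_left]
  rw [thetaJK]
  exact tsum_congr fun r => (hterm r).symm
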